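/- In the rewrite game over {a,b} with rules a^2 → ε and b → ε, a word u has Grundy value 0 if and only if (|u|_a − 2|u|_b) mod 4 ∈ {0,1}, and Grundy value 1 if and only if (|u|_a − 2|u|_b) mod 4 ∈ {2,3}. In particular the Grundy function of this game takes only values 0 and 1. -/

import Mathlib

inductive AB | a | b
deriving DecidableEq

/-- One move of the game `{a² → ε, b → ε}`. -/
def Step (w w' : List AB) : Prop :=
  ∃ x y : List AB, w' = x ++ y ∧
    (w = x ++ [AB.a, AB.a] ++ y ∨ w = x ++ [AB.b] ++ y)

/-- The minimum excluded value of a set of naturals. -/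
noncomputable def mex (S : Set ℕ) : ℕ := sInf {n | n ∉ S}

/-- `g` is the Grundy function of the game with moves `step`. -/
def IsGrundy (step : List AB → List AB → Prop) (g : List AB → ℕ) : Prop :=
  ∀ w, g w = mex (g '' {w' | step w w'})

/-- `S(u) = |u|_a − 2|u|_b` computed modulo 4. -/
def S (u : List AB) : ZMod 4 := (u.count AB.a : ZMod 4) - 2 * (u.count AB.b : ZMod 4)

/-
Every move adds 2 to `S` modulo 4, so it swaps the classes `{0, 1}` and `{2, 3}`; and every word
with `S ∈ {2, 3}` has a move, since the only dead positions `ε` and `a` have `S = 0` and `S = 1`.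
Hence `⌊S / 2⌋` satisfies the stability and absorption conditions that characterize the Grundy
function.
-/

lemma mex_eq_of_forall_lt_mem {s : Set ℕ} {n : ℕ} (hn : n ∉ s) (hlt : ∀ j < n, j ∈ s) :
    mex s = n :=
  le_antisymm (Nat.sInf_le hn) <|
    le_csInf ⟨n, hn⟩ fun m hm => not_lt.1 fun hmn => hm (hlt m hmn)

lemma IsGrundy.eq_of_stable_of_absorbing {step : List AB → List AB → Prop} {g f : List AB → ℕ}
    (hg : IsGrundy step g) (hwf : WellFounded fun v w => step w v)
    (hstable : ∀ w v, step w v → f v ≠ f w)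
    (habsorb : ∀ w, ∀ j < f w, ∃ v, step w v ∧ f v = j) : g = f := by
  funext w
  induction w using hwf.induction with
  | _ w ih =>
    rw [hg w, Set.image_congr (s := {v | step w v}) fun v hv => ih v hv]
    refine mex_eq_of_forall_lt_mem ?_ fun j hj => ?_
    · rintro ⟨v, hv, hfv⟩
      exact hstable w v hv hfv
    · obtain ⟨v, hv, rfl⟩ := habsorb w j hj
      exact ⟨v, hv, rfl⟩

lemma step_length_lt {w v : List AB} (h : Step w v) : v.length < w.length := by
  obtain ⟨x, y, rfl, rfl | rfl⟩ := h <;> simp +arith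

lemma wellFounded_step : WellFounded fun v w => Step w v :=
  Subrelation.wf (fun h => step_length_lt h) (measure List.length).wf

lemma S_append (x y : List AB) : S (x ++ y) = S x + S y := by
  simp only [S, List.count_append]
  push_cast
  ring

lemma S_step {w v : List AB} (h : Step w v) : S v = S w + 2 := by
  obtain ⟨x, y, rfl, rfl | rfl⟩ := h <;>
  · have h4 : (4 : ZMod 4) = 0 := by decide
    simp only [S_append, show S [AB.a, AB.a] = 2 by decide, show S [AB.b] = 2 by decide]
    linear_combination -h4

lemma exists_step {u : List AB} (h₀ : u ≠ []) (h₁ : u ≠ [AB.a]) : ∃ v, Step u v := by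
  match u with
  | AB.b :: t => exact ⟨t, [], t, rfl, Or.inr rfl⟩
  | AB.a :: AB.a :: t => exact ⟨t, [], t, rfl, Or.inl rfl⟩
  | AB.a :: AB.b :: t => exact ⟨AB.a :: t, [AB.a], t, rfl, Or.inr rfl⟩

lemma IsGrundy.step_eq_val_S_div_two {g : List AB → ℕ} (hg : IsGrundy Step g) :
    g = fun u => (S u).val / 2 := by
  have hflip : ∀ x : ZMod 4, (x + 2).val / 2 = 1 - x.val / 2 := by decide
  have hle : ∀ x : ZMod 4, x.val / 2 ≤ 1 := by decide
  refine hg.eq_of_stable_of_absorbing wellFounded_step (fun w v h => ?_) (fun w j hj => ?_)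
  · have := hle (S w)
    simp only [S_step h, hflip]
    omega
  · have hw : (S w).val / 2 = 1 := by have := hle (S w); omega
    obtain ⟨v, hv⟩ := exists_step (u := w) (by rintro rfl; revert hw; decide)
      (by rintro rfl; revert hw; decide)
    refine ⟨v, hv, ?_⟩
    simp only [S_step hv, hflip, hw]
    omega

theorem stmt8 (g : List AB → ℕ) (hg : IsGrundy Step g) :
    (∀ u : List AB, (g u = 0 ↔ S u ∈ ({0, 1} : Set (ZMod 4)))) ∧
    (∀ u : List AB, (g u = 1 ↔ S u ∈ ({2, 3} : Set (ZMod 4)))) ∧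
    (∀ u : List AB, g u ≤ 1) := by
  have hval : ∀ x : ZMod 4,
      (x.val / 2 = 0 ↔ x ∈ ({0, 1} : Set (ZMod 4))) ∧
      (x.val / 2 = 1 ↔ x ∈ ({2, 3} : Set (ZMod 4))) ∧ x.val / 2 ≤ 1 := by
    decide
  rw [hg.step_eq_val_S_div_two]
  exact ⟨fun u => (hval (S u)).1, fun u => (hval (S u)).2.1, fun u => (hval (S u)).2.2⟩
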